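/- Let a be a single letter and z ∈ a(Δa)* a tagged word over the single-letter alphabet {a} in which at least two distinct tags occur. If |z| ≥ 2k+3 for an odd k ≥ 3 (i.e., z is sufficiently long), then the set φ_k(z) of tagged k-word factors of z is conflictual. -/
import Mathlib


/-!
Common framework from the paper "Higher-order Operator Precedence Languages":
tagged words over an alphabet `α` (with a distinguished end-mark letter
`hash`), the tag set Δ = {[, ], ⊙}, tagged `k`-word factors, conflictual sets,
the strictly-locally-testable tagged language `Loc(Φ)`, handles, reductions
`⇝_Φ`, and the (tagged) maximal languages `RedBar Φ` / `Red Φ`.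

Conventions: an end-word `⍟` is the alternating word `(#⊙)^m #` of (tagged)
length `k-2`, so that it contributes `(k-1)/2` end-marks on each side,
matching all the examples of the paper.
-/

namespace HOP

/-- The three tags `[`, `]`, `⊙`. -/
inductive Tagg : Type where
  | lb : Tagg
  | rb : Tagg
  | dot : Tagg
deriving DecidableEq

/-- Symbols: either a terminal letter of `α` or a tag. -/
abbrev Sym (α : Type) := α ⊕ Tagg

/-- The projection `σ` erasing all tags. -/
def erase {α : Type} (w : List (Sym α)) : List α := w.filterMap Sum.getLeft?

/-- Tagged words: words in `Σ(ΔΣ)*`, i.e. alternating terminals and tags,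
beginning and ending with a terminal. -/
inductive IsTagged {α : Type} : List (Sym α) → Prop where
  | single (a : α) : IsTagged [Sum.inl a]
  | cons (a : α) (t : Tagg) {w : List (Sym α)} :
      IsTagged w → IsTagged (Sum.inl a :: Sum.inr t :: w)

/-- `φ_k(w)`: the set of tagged `k`-words occurring as factors of `w`. -/
def taggedFactors {α : Type} (k : ℕ) (w : List (Sym α)) : Set (List (Sym α)) :=
  {u | u.length = k ∧ IsTagged u ∧ u <:+: w}

/-- A set of tagged words is conflictual iff it contains two distinct words
with the same tag-erasure. -/
def Conflictual {α : Type} (S : Set (List (Sym α))) : Prop :=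
  ∃ x ∈ S, ∃ y ∈ S, x ≠ y ∧ erase x = erase y

def NonConflictual {α : Type} (S : Set (List (Sym α))) : Prop := ¬ Conflictual S

/-- `S` is a set of tagged `k`-words. -/
def TaggedKWords {α : Type} (k : ℕ) (S : Set (List (Sym α))) : Prop :=
  ∀ u ∈ S, IsTagged u ∧ u.length = k

/-- `hashWord hash n = # ⊙ # ⊙ … #` with `n+1` end-marks (tagged length `2n+1`). -/
def hashWord {α : Type} (hash : α) : ℕ → List (Sym α)
  | 0 => [Sum.inl hash]
  | n + 1 => Sum.inl hash :: Sum.inr Tagg.dot :: hashWord hash n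

/-- The end-word `⍟ ∈ (#⊙)*#` used with width `k`: it has tagged length `k-2`
(for odd `k ≥ 3`), i.e. `(k-1)/2` end-marks. -/
def endwFor {α : Type} (hash : α) (k : ℕ) : List (Sym α) := hashWord hash ((k - 3) / 2)

/-- `wrap hash k w = ⍟ [ w ] ⍟`. -/
def wrap {α : Type} (hash : α) (k : ℕ) (w : List (Sym α)) : List (Sym α) :=
  endwFor hash k ++ Sum.inr Tagg.lb :: (w ++ Sum.inr Tagg.rb :: endwFor hash k)

/-- `finalWord hash k = ⍟ ⊙ ⍟`, the target of a complete reduction. -/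
def finalWord {α : Type} (hash : α) (k : ℕ) : List (Sym α) :=
  endwFor hash k ++ Sum.inr Tagg.dot :: endwFor hash k

/-- The (full-word form of the) `k`-strictly-locally-testable tagged language:
all tagged `k`-word factors belong to `Φ`.  A tagged word `w` is in `Loc(Φ)`
in the sense of the paper iff `wrap hash k w ∈ LocFull k Φ`. -/
def LocFull {α : Type} (k : ℕ) (Φ : Set (List (Sym α))) : Set (List (Sym α)) :=
  {w | IsTagged w ∧ taggedFactors k w ⊆ Φ}

/-- `Loc(Φ)` as a set of tagged words `w` (tested on `⍟[w]⍟`). -/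
def LocTagged {α : Type} (hash : α) (k : ℕ) (Φ : Set (List (Sym α))) :
    Set (List (Sym α)) :=
  {w | IsTagged w ∧ wrap hash k w ∈ LocFull k Φ}

/-- The body `x` of a handle `[x]`: a tagged word over `Σ - {#}` whose tags are
all `⊙`. -/
def IsHandleBody {α : Type} (hash : α) (x : List (Sym α)) : Prop :=
  IsTagged x ∧ (∀ t : Tagg, Sum.inr t ∈ x → t = Tagg.dot) ∧ Sum.inl hash ∉ x

/-- One reduction step `w[x]z ⇝_Φ w s z`, allowed when `[x]` is a handle and
both source and target have all their tagged `k`-factors in `Φ`. -/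
def RStep {α : Type} (hash : α) (k : ℕ) (Φ : Set (List (Sym α)))
    (u v : List (Sym α)) : Prop :=
  ∃ w x z, ∃ s : Tagg, IsHandleBody hash x ∧
    u = w ++ Sum.inr Tagg.lb :: (x ++ Sum.inr Tagg.rb :: z) ∧
    v = w ++ Sum.inr s :: z ∧
    u ∈ LocFull k Φ ∧ v ∈ LocFull k Φ

/-- `⇝*_Φ`. -/
def Reduces {α : Type} (hash : α) (k : ℕ) (Φ : Set (List (Sym α))) :
    List (Sym α) → List (Sym α) → Prop :=
  Relation.ReflTransGen (RStep hash k Φ)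

/-- The tagged maximal language `Red̄(Φ)`. -/
def RedBar {α : Type} (hash : α) (k : ℕ) (Φ : Set (List (Sym α))) :
    Set (List (Sym α)) :=
  {w | IsTagged w ∧ Reduces hash k Φ (wrap hash k w) (finalWord hash k)}

/-- The maximal language `Red(Φ) = σ(Red̄(Φ))`. -/
def Red {α : Type} (hash : α) (k : ℕ) (Φ : Set (List (Sym α))) : Set (List α) :=
  erase '' RedBar hash k Φ

/-- Length-`j` factors of a plain word. -/
def plainFactors {α : Type} (j : ℕ) (w : List α) : Set (List α) :=
  {u | u.length = j ∧ u <:+: w}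

/-- The `j`-strictly-locally-testable (plain) language `Loc(F)`, with
end-words `#^(j-1)`; as usual the language is `ε`-free and over `Σ - {#}`. -/
def LocPlain {α : Type} (hash : α) (j : ℕ) (F : Set (List α)) : Set (List α) :=
  {x | x ≠ [] ∧ hash ∉ x ∧
    plainFactors j
      (List.replicate (j - 1) hash ++ x ++ List.replicate (j - 1) hash) ⊆ F}

end HOP

namespace HOP

variable {α : Type}

def interleave (a : α) : List Tagg → List (Sym α)
  | [] => [Sum.inl a]
  | t :: ts => Sum.inl a :: Sum.inr t :: interleave a ts

def pairs (a : α) : List Tagg → List (Sym α)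
  | [] => []
  | t :: ts => Sum.inl a :: Sum.inr t :: pairs a ts

lemma interleave_tagged (a : α) (l : List Tagg) : IsTagged (interleave a l) := by
  induction l with
  | nil => exact IsTagged.single a
  | cons t ts ih => exact IsTagged.cons a t ih

lemma interleave_length (a : α) (l : List Tagg) :
    (interleave a l).length = 2 * l.length + 1 := by
  induction l with
  | nil => rfl
  | cons t ts ih => simp [interleave, ih]; ring

lemma interleave_inj (a : α) {l l' : List Tagg}
    (h : interleave a l = interleave a l') : l = l' := by
  induction l generalizing l' with
  | nil => cases l' <;> simp_all [interleave]
  | cons t ts ih =>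
    cases l' with
    | nil => simp [interleave] at h
    | cons t' ts' =>
      simp only [interleave, List.cons.injEq] at h
      obtain ⟨-, h1, h2⟩ := h
      exact by simp [Sum.inr.injEq] at h1; rw [h1, ih h2]

lemma interleave_eq_pairs (a : α) (l : List Tagg) :
    interleave a l = pairs a l ++ [Sum.inl a] := by
  induction l with
  | nil => rfl
  | cons t ts ih => simp [interleave, pairs, ih]

lemma interleave_append (a : α) (l₁ l₂ : List Tagg) :
    interleave a (l₁ ++ l₂) = pairs a l₁ ++ interleave a l₂ := by
  induction l₁ with
  | nil => rfl
  | cons t ts ih => simp [interleave, pairs, ih]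

lemma interleave_cons_head (a : α) (l : List Tagg) :
    ∃ r, interleave a l = Sum.inl a :: r := by
  cases l <;> exact ⟨_, rfl⟩

lemma interleave_infix (a : α) (p w q : List Tagg) :
    interleave a w <:+: interleave a (p ++ w ++ q) := by
  obtain ⟨r, hr⟩ := interleave_cons_head a q
  refine ⟨pairs a p, r, ?_⟩
  rw [List.append_assoc p w q, interleave_append a p (w ++ q), interleave_append a w q,
    interleave_eq_pairs a w, hr]
  simp

lemma erase_interleave (a : α) (l : List Tagg) :
    erase (interleave a l) = List.replicate (l.length + 1) a := by
  induction l with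
  | nil => rfl
  | cons t ts ih =>
    simp only [interleave, erase, List.filterMap_cons] at *
    simp [ih, List.replicate_succ, Sum.getLeft?]

lemma tag_mem_interleave (a : α) (l : List Tagg) (s : Tagg) :
    Sum.inr s ∈ interleave a l ↔ s ∈ l := by
  induction l with
  | nil => simp [interleave]
  | cons t ts ih => simp [interleave, ih]

lemma exists_rep {a : α} {z : List (Sym α)} (hz : IsTagged z)
    (hl : ∀ b : α, Sum.inl b ∈ z → b = a) : ∃ ts, z = interleave a ts := by
  induction hz with
  | single b => exact ⟨[], by rw [hl b (by simp)]; rfl⟩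
  | @cons b t w hw ih =>
    obtain ⟨ts, hts⟩ := ih (fun c hc => hl c (by simp [hc]))
    exact ⟨t :: ts, by rw [hl b (by simp), hts]; rfl⟩

lemma exists_adj {l : List Tagg}
    (h : ∃ s s', s ≠ s' ∧ s ∈ l ∧ s' ∈ l) :
    ∃ j, ∃ hj : j + 1 < l.length, l[j] ≠ l[j+1] := by
  by_contra hc
  push_neg at hc
  have hconst : ∀ i, ∀ hi : i < l.length, l[i] = l[0]'(by omega) := by
    intro i
    induction i with
    | zero => intro _; rfl
    | succ n ih =>
      intro hi
      have h1 : n + 1 < l.length := hi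
      have := hc n (by omega)
      rw [← this]
      exact ih (by omega)
  obtain ⟨s, s', hne, hs, hs'⟩ := h
  obtain ⟨i, hi, rfl⟩ := List.mem_iff_getElem.mp hs
  obtain ⟨i', hi', rfl⟩ := List.mem_iff_getElem.mp hs'
  exact hne (by rw [hconst i hi, hconst i' hi'])

lemma window_mem (a : α) (ts : List Tagg) (m i : ℕ)
    (h : i + m ≤ ts.length) :
    interleave a ((ts.drop i).take m) ∈ taggedFactors (2 * m + 1) (interleave a ts) := by
  set w := (ts.drop i).take m with hw
  have hlen : w.length = m := by
    rw [hw, List.length_take, List.length_drop]; omega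
  refine ⟨by rw [interleave_length, hlen], interleave_tagged a w, ?_⟩
  have hdecomp : ts = ts.take i ++ w ++ ts.drop (i + m) := by
    rw [hw]
    nth_rewrite 1 [← List.take_append_drop i ts]
    rw [← List.drop_drop]
    nth_rewrite 1 [← List.take_append_drop m (ts.drop i)]
    simp
  rw [hdecomp]
  exact interleave_infix a _ _ _


/-- Corollary of Lemma 1: over a one-letter alphabet `{a}`, any sufficiently
long tagged word `z ∈ a(Δa)*` (here `|z| ≥ 2k+3`) in which two distinct tags
occur has a conflictual set `φ_k(z)` of tagged `k`-word factors. -/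
theorem conflict_corollary {α : Type} (a : α) {k : ℕ} (hk : Odd k) (hk3 : 3 ≤ k)
    {z : List (Sym α)} (hz : IsTagged z)
    (hletters : ∀ b : α, Sum.inl b ∈ z → b = a)
    (htags : ∃ s s' : Tagg, s ≠ s' ∧ Sum.inr s ∈ z ∧ Sum.inr s' ∈ z)
    (hlong : 2 * k + 3 ≤ z.length) :
    Conflictual (taggedFactors k z) := by
  obtain ⟨ts, rfl⟩ := exists_rep hz hletters
  obtain ⟨m, hm⟩ := hk
  have hm1 : 1 ≤ m := by omega
  have hn : 2 * m + 2 ≤ ts.length := by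
    rw [interleave_length] at hlong; omega
  -- find adjacent distinct tags
  obtain ⟨j, hj, hne⟩ := exists_adj (by
    obtain ⟨s, s', h1, h2, h3⟩ := htags
    exact ⟨s, s', h1, (tag_mem_interleave a ts s).mp h2,
      (tag_mem_interleave a ts s').mp h3⟩)
  -- choose window start i and slot r with i + r = j
  obtain ⟨i, r, hr, hir, hfit⟩ :
      ∃ i r, r < m ∧ i + r = j ∧ i + 1 + m ≤ ts.length := by
    by_cases hcase : j + 1 + m ≤ ts.length
    · exact ⟨j, 0, by omega, by omega, by omega⟩
    · exact ⟨j + 1 - m, m - 1, by omega, by omega, by omega⟩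
  set w₁ := (ts.drop i).take m with hw₁
  set w₂ := (ts.drop (i+1)).take m with hw₂
  have hk2 : k = 2 * m + 1 := by omega
  have hmem₁ := window_mem a ts m i (by omega)
  have hmem₂ := window_mem a ts m (i+1) (by omega)
  rw [← hk2] at hmem₁ hmem₂
  refine ⟨interleave a w₁, hmem₁, interleave a w₂, hmem₂, ?_, ?_⟩
  · intro heq
    have hww := interleave_inj a heq
    have hget := congrArg (fun l => l[r]?) hww
    simp only [hw₁, hw₂] at hget
    rw [List.getElem?_take, List.getElem?_take, List.getElem?_drop,
      List.getElem?_drop] at hget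
    have e1 : i + r = j := hir
    have e2 : i + 1 + r = j + 1 := by omega
    rw [e1, e2, List.getElem?_eq_getElem (by omega), List.getElem?_eq_getElem hj] at hget
    simp [hr] at hget
    exact hne hget
  · rw [erase_interleave, erase_interleave]
    have hl₁ : w₁.length = m := by
      rw [hw₁, List.length_take, List.length_drop]; omega
    have hl₂ : w₂.length = m := by
      rw [hw₂, List.length_take, List.length_drop]; omega
    rw [hl₁, hl₂]

end HOP
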